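/- arXiv:2010.01198 — 3 statements merged into one kernel-verified Lean document; each statement's English description precedes it below -/
import Mathlib

section
/- Let m₁, m₂, k₁, k₂ > 0 and let ω > 0 be such that m₂ω² ≠ k₂. Then there exists a real number φ satisfying the dispersion relation (2k₁(1 − cos φ) + k₂ − m₁ω²)·(k₂ − m₂ω²) = k₂² of the linear undamped mass-in-mass chain if and only if 0 ≤ m₁ω² + (k₂ m₂ ω²)/(k₂ − m₂ω²) ≤ 4k₁. Equivalently, the frequency ω supports a propagating traveling wave with real wavenumber exactly when the quantity f(ω) = m₁ω² + (k₂ m₂ ω²)/(k₂ − m₂ω²) lies in the interval [0, 4k₁]; frequencies with f(ω) ∉ [0, 4k₁] lie in a band gap. -/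
/-! Clearing the denominator `k₂ − m₂ω²` turns the dispersion relation into
`2k₁(1 − cos φ) = m₁ω² + k₂m₂ω²/(k₂ − m₂ω²)`, and since `cos` takes exactly the values in
`[-1, 1]`, the left-hand side ranges over exactly `[0, 4k₁]`. -/

theorem add_sub_mul_sub_eq_sq_iff {x k m n : ℝ} (hkn : k - n ≠ 0) :
    (x + k - m) * (k - n) = k ^ 2 ↔ x = m + k * n / (k - n) := by
  rw [← sub_eq_iff_eq_add', eq_div_iff hkn]
  constructor <;> intro h <;> linear_combination h

theorem exists_two_mul_one_sub_cos_eq_iff {a y : ℝ} (ha : 0 < a) :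
    (∃ φ, 2 * a * (1 - Real.cos φ) = y) ↔ 0 ≤ y ∧ y ≤ 4 * a := by
  have hcos : ∀ φ, 2 * a * (1 - Real.cos φ) = y ↔ Real.cos φ = 1 - y / (2 * a) := by
    intro φ
    rw [eq_sub_iff_add_eq, ← eq_sub_iff_add_eq', div_eq_iff (by positivity)]
    constructor <;> intro h <;> linear_combination -h
  simp only [hcos]
  rw [← Set.mem_range, Real.range_cos, Set.mem_Icc, le_sub_comm, sub_le_comm,
    div_le_iff₀ (by positivity), le_div_iff₀ (by positivity)]
  constructor <;> rintro ⟨h₁, h₂⟩ <;> constructor <;> linarith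

theorem dispersion_solvable_iff_in_pass_band_general
    (m₁ m₂ k₁ k₂ : ℝ) (hk₁ : 0 < k₁)
    (ω : ℝ) (hres : m₂ * ω ^ 2 ≠ k₂) :
    (∃ φ : ℝ,
        (2 * k₁ * (1 - Real.cos φ) + k₂ - m₁ * ω ^ 2) * (k₂ - m₂ * ω ^ 2) = k₂ ^ 2)
    ↔
    (0 ≤ m₁ * ω ^ 2 + (k₂ * m₂ * ω ^ 2) / (k₂ - m₂ * ω ^ 2)
      ∧ m₁ * ω ^ 2 + (k₂ * m₂ * ω ^ 2) / (k₂ - m₂ * ω ^ 2) ≤ 4 * k₁) := by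
  simp only [add_sub_mul_sub_eq_sq_iff (sub_ne_zero.mpr hres.symm), mul_assoc k₂ m₂]
  exact exists_two_mul_one_sub_cos_eq_iff hk₁

/-- for `m₂ω² ≠ k₂`, a real wavenumber-phase `φ` satisfying the
dispersion relation exists iff `m₁ω² + k₂m₂ω²/(k₂ − m₂ω²) ∈ [0, 4k₁]`. -/
theorem dispersion_solvable_iff_in_pass_band
    (m₁ m₂ k₁ k₂ : ℝ) (hm₁ : 0 < m₁) (hm₂ : 0 < m₂) (hk₁ : 0 < k₁) (hk₂ : 0 < k₂)
    (ω : ℝ) (hω : 0 < ω) (hres : m₂ * ω ^ 2 ≠ k₂) :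
    (∃ φ : ℝ,
        (2 * k₁ * (1 - Real.cos φ) + k₂ - m₁ * ω ^ 2) * (k₂ - m₂ * ω ^ 2) = k₂ ^ 2)
    ↔
    (0 ≤ m₁ * ω ^ 2 + (k₂ * m₂ * ω ^ 2) / (k₂ - m₂ * ω ^ 2)
      ∧ m₁ * ω ^ 2 + (k₂ * m₂ * ω ^ 2) / (k₂ - m₂ * ω ^ 2) ≤ 4 * k₁) :=
  dispersion_solvable_iff_in_pass_band_general m₁ m₂ k₁ k₂ hk₁ ω hres
end

section
/- Let m₁, m₂, k₁, k₂ > 0. Then there exists ε > 0 such that for every ω > 0 with 0 < |m₂ω² − k₂| < ε, there is no real number φ satisfying the dispersion relation (2k₁(1 − cos φ) + k₂ − m₁ω²)·(k₂ − m₂ω²) = k₂² of the linear undamped mass-in-mass chain. In other words, the chain possesses a band gap containing frequencies arbitrarily close to (on both sides of) the local resonance frequency ω₂ = √(k₂/m₂) of the internal resonator. -/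
/-!
Write `δ = k₂ - m₂ω²`. Once `|δ| < k₂`, the frequency is bounded (`m₂ω² < 2k₂`), so the first
factor of the dispersion relation is bounded by a constant `M` uniformly in `φ`. The left-hand side
is then at most `M |δ|`, which is smaller than `k₂²` as soon as `|δ| < k₂² / M`.
-/

open Real

theorem abs_two_mul_one_sub_cos_le (k φ : ℝ) : |2 * k * (1 - cos φ)| ≤ 4 * |k| := by
  have h : |1 - cos φ| ≤ 2 := by
    rw [abs_le]
    constructor <;> linarith [neg_one_le_cos φ, cos_le_one φ]
  calc |2 * k * (1 - cos φ)| = 2 * |k| * |1 - cos φ| := by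
        rw [abs_mul, abs_mul, abs_two]
    _ ≤ 2 * |k| * 2 := by gcongr
    _ = 4 * |k| := by ring

theorem mul_ne_of_abs_le_of_mul_abs_lt {a b d M : ℝ} (ha : |a| ≤ M) (hb : M * |b| < |d|) :
    a * b ≠ d := by
  rintro rfl
  rw [abs_mul] at hb
  exact (mul_le_mul_of_nonneg_right ha (abs_nonneg b)).not_gt hb

theorem abs_dispersion_factor_le {m₁ m₂ k₁ k₂ ω : ℝ} (hm₂ : 0 < m₂) (hω : m₂ * ω ^ 2 ≤ 2 * k₂)
    (φ : ℝ) :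
    |2 * k₁ * (1 - cos φ) + k₂ - m₁ * ω ^ 2| ≤ 4 * |k₁| + |k₂| + |m₁| * (2 * k₂ / m₂) := by
  have hω' : ω ^ 2 ≤ 2 * k₂ / m₂ := by rwa [le_div_iff₀ hm₂, mul_comm]
  calc |2 * k₁ * (1 - cos φ) + k₂ - m₁ * ω ^ 2|
      ≤ |2 * k₁ * (1 - cos φ)| + |k₂| + |m₁| * ω ^ 2 := by
        refine (abs_sub _ _).trans ?_
        rw [abs_mul, abs_of_nonneg (sq_nonneg ω)]
        gcongr
        exact abs_add_le _ _
    _ ≤ 4 * |k₁| + |k₂| + |m₁| * (2 * k₂ / m₂) := by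
        gcongr
        exact abs_two_mul_one_sub_cos_le k₁ φ

theorem band_gap_near_local_resonance_general
    (m₁ m₂ k₁ k₂ : ℝ) (hm₂ : 0 < m₂) (hk₂ : 0 < k₂) :
    ∃ ε > 0, ∀ ω : ℝ, 0 < ω →
      0 < |m₂ * ω ^ 2 - k₂| → |m₂ * ω ^ 2 - k₂| < ε →
      ¬ ∃ φ : ℝ,
        (2 * k₁ * (1 - Real.cos φ) + k₂ - m₁ * ω ^ 2) * (k₂ - m₂ * ω ^ 2) = k₂ ^ 2 := by
  set M := 4 * |k₁| + |k₂| + |m₁| * (2 * k₂ / m₂)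
  have hM : 0 < M := by positivity
  refine ⟨min k₂ (k₂ ^ 2 / M), by positivity, fun ω _ _ hδ ⟨φ, hdisp⟩ => ?_⟩
  rw [lt_min_iff, abs_sub_comm] at hδ
  have hω : m₂ * ω ^ 2 ≤ 2 * k₂ := by linarith [(abs_lt.1 hδ.1).1]
  refine mul_ne_of_abs_le_of_mul_abs_lt (abs_dispersion_factor_le hm₂ hω φ) ?_ hdisp
  calc M * |k₂ - m₂ * ω ^ 2| < M * (k₂ ^ 2 / M) := by gcongr; exact hδ.2
    _ = |k₂ ^ 2| := by rw [mul_div_cancel₀ _ hM.ne', abs_sq]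

/-- there is a band gap around the internal-resonator local
resonance frequency: for frequencies with `m₂ω²` close to (but distinct from)
`k₂`, no real `φ` satisfies the dispersion relation. -/
theorem band_gap_near_local_resonance
    (m₁ m₂ k₁ k₂ : ℝ) (hm₁ : 0 < m₁) (hm₂ : 0 < m₂) (hk₁ : 0 < k₁) (hk₂ : 0 < k₂) :
    ∃ ε > 0, ∀ ω : ℝ, 0 < ω →
      0 < |m₂ * ω ^ 2 - k₂| → |m₂ * ω ^ 2 - k₂| < ε →
      ¬ ∃ φ : ℝ,
        (2 * k₁ * (1 - Real.cos φ) + k₂ - m₁ * ω ^ 2) * (k₂ - m₂ * ω ^ 2) = k₂ ^ 2 :=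
  band_gap_near_local_resonance_general m₁ m₂ k₁ k₂ hm₂ hk₂
end

section
/- Let m₁, m₂, k₁, k₂ > 0 and let ω > 0 satisfy m₂ω² > k₂ together with k₂ m₂ ω² > m₁ω²·(m₂ω² − k₂) (i.e., the dispersion quantity m₁ω² + (k₂ m₂ ω²)/(k₂ − m₂ω²) is negative, so ω lies in a band gap). Then there exist γ > 0 and amplitudes A₁, A₂, not both zero, such that the spatially decaying standing-wave functions u₁(j)(t) = A₁·e^{−γ j}·cos(ωt) and u₂(j)(t) = A₂·e^{−γ j}·cos(ωt) satisfy, for all j ∈ ℤ and t ∈ ℝ, the linear undamped mass-in-mass chain equations m₁·u₁(j)''(t) + k₁(2u₁(j)(t) − u₁(j+1)(t) − u₁(j−1)(t)) + k₂(u₁(j)(t) − u₂(j)(t)) = 0 and m₂·u₂(j)''(t) + k₂(u₂(j)(t) − u₁(j)(t)) = 0. In particular, within this band gap the chain response at frequency ω decays exponentially with the unit index j rather than propagating. -/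
/-!
Substituting `uᵢ(j)(t) = Aᵢ e^{-γj} cos ωt` turns the chain into the dispersion relation with
`cos φ` replaced by `cosh γ`. The internal resonator equation is solved by `A₁ = k₂ - m₂ω²`,
`A₂ = k₂`, and the main one then asks for `cosh γ = c` with
`(2k₁(1 - c) + k₂ - m₁ω²)(k₂ - m₂ω²) = k₂²`. In the gap this `c` exceeds `1`, so `γ = arcosh c > 0`.
-/

open Real

theorem deriv_deriv_const_mul_cos (C ω t : ℝ) :
    deriv (deriv fun s => C * cos (ω * s)) t = -ω ^ 2 * (C * cos (ω * t)) := by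
  simp only [deriv_const_mul_field', deriv_comp_mul_left, deriv_cos', smul_eq_mul, mul_neg,
    deriv.fun_neg', Real.deriv_sin, neg_mul, neg_inj]
  ring

theorem exp_neg_mul_add_one_add_exp_neg_mul_sub_one (γ x : ℝ) :
    exp (-γ * (x + 1)) + exp (-γ * (x - 1)) = 2 * cosh γ * exp (-γ * x) := by
  rw [cosh_eq, show -γ * (x + 1) = -γ * x + -γ by ring, show -γ * (x - 1) = -γ * x + γ by ring,
    exp_add, exp_add]
  ring

theorem exists_one_lt_massInMass_dispersion {m₁ m₂ k₁ k₂ ω : ℝ} (hk₁ : 0 < k₁)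
    (hgap₁ : m₂ * ω ^ 2 > k₂) (hgap₂ : k₂ * m₂ * ω ^ 2 > m₁ * ω ^ 2 * (m₂ * ω ^ 2 - k₂)) :
    ∃ c > 1, (2 * k₁ * (1 - c) + k₂ - m₁ * ω ^ 2) * (k₂ - m₂ * ω ^ 2) = k₂ ^ 2 := by
  have hD : 0 < m₂ * ω ^ 2 - k₂ := sub_pos.2 hgap₁
  refine ⟨1 + (k₂ * m₂ * ω ^ 2 - m₁ * ω ^ 2 * (m₂ * ω ^ 2 - k₂)) / (2 * k₁ * (m₂ * ω ^ 2 - k₂)),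
    lt_add_of_pos_right 1 (div_pos (sub_pos.2 hgap₂) (by positivity)), ?_⟩
  field_simp
  ring

theorem evanescent_wave_in_band_gap_general
    (m₁ m₂ k₁ k₂ : ℝ) (hk₁ : 0 < k₁)
    (ω : ℝ)
    (hgap₁ : m₂ * ω ^ 2 > k₂)
    (hgap₂ : k₂ * m₂ * ω ^ 2 > m₁ * ω ^ 2 * (m₂ * ω ^ 2 - k₂)) :
    ∃ γ > 0, ∃ A₁ A₂ : ℝ, ¬(A₁ = 0 ∧ A₂ = 0) ∧
      ∀ j : ℤ, ∀ t : ℝ,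
        (m₁ * deriv (deriv (fun s : ℝ => A₁ * Real.exp (-γ * (j : ℝ)) * Real.cos (ω * s))) t
          + k₁ * (2 * (A₁ * Real.exp (-γ * (j : ℝ)) * Real.cos (ω * t))
              - A₁ * Real.exp (-γ * ((j : ℝ) + 1)) * Real.cos (ω * t)
              - A₁ * Real.exp (-γ * ((j : ℝ) - 1)) * Real.cos (ω * t))
          + k₂ * (A₁ * Real.exp (-γ * (j : ℝ)) * Real.cos (ω * t)
              - A₂ * Real.exp (-γ * (j : ℝ)) * Real.cos (ω * t)) = 0)
        ∧
        (m₂ * deriv (deriv (fun s : ℝ => A₂ * Real.exp (-γ * (j : ℝ)) * Real.cos (ω * s))) t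
          + k₂ * (A₂ * Real.exp (-γ * (j : ℝ)) * Real.cos (ω * t)
              - A₁ * Real.exp (-γ * (j : ℝ)) * Real.cos (ω * t)) = 0) := by
  obtain ⟨c, hc, hdisp⟩ := exists_one_lt_massInMass_dispersion hk₁ hgap₁ hgap₂
  have hcosh : cosh (arcosh c) = c := cosh_arcosh hc.le
  refine ⟨arcosh c, arcosh_pos hc, k₂ - m₂ * ω ^ 2, k₂,
    fun h => sub_ne_zero.2 hgap₁.ne h.1, fun j t => ⟨?_, ?_⟩⟩
  · have hshift := exp_neg_mul_add_one_add_exp_neg_mul_sub_one (arcosh c) j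
    rw [hcosh] at hshift
    rw [deriv_deriv_const_mul_cos]
    linear_combination (-k₁ * (k₂ - m₂ * ω ^ 2) * cos (ω * t)) * hshift
      + exp (-arcosh c * j) * cos (ω * t) * hdisp
  · rw [deriv_deriv_const_mul_cos]
    ring

/-- within the band gap where the dispersion quantity is negative,
there exists a nontrivial exponentially decaying (evanescent) standing-wave
solution of the linear undamped mass-in-mass chain. -/
theorem evanescent_wave_in_band_gap
    (m₁ m₂ k₁ k₂ : ℝ) (hm₁ : 0 < m₁) (hm₂ : 0 < m₂) (hk₁ : 0 < k₁) (hk₂ : 0 < k₂)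
    (ω : ℝ) (hω : 0 < ω)
    (hgap₁ : m₂ * ω ^ 2 > k₂)
    (hgap₂ : k₂ * m₂ * ω ^ 2 > m₁ * ω ^ 2 * (m₂ * ω ^ 2 - k₂)) :
    ∃ γ > 0, ∃ A₁ A₂ : ℝ, ¬(A₁ = 0 ∧ A₂ = 0) ∧
      ∀ j : ℤ, ∀ t : ℝ,
        (m₁ * deriv (deriv (fun s : ℝ => A₁ * Real.exp (-γ * (j : ℝ)) * Real.cos (ω * s))) t
          + k₁ * (2 * (A₁ * Real.exp (-γ * (j : ℝ)) * Real.cos (ω * t))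
              - A₁ * Real.exp (-γ * ((j : ℝ) + 1)) * Real.cos (ω * t)
              - A₁ * Real.exp (-γ * ((j : ℝ) - 1)) * Real.cos (ω * t))
          + k₂ * (A₁ * Real.exp (-γ * (j : ℝ)) * Real.cos (ω * t)
              - A₂ * Real.exp (-γ * (j : ℝ)) * Real.cos (ω * t)) = 0)
        ∧
        (m₂ * deriv (deriv (fun s : ℝ => A₂ * Real.exp (-γ * (j : ℝ)) * Real.cos (ω * s))) t
          + k₂ * (A₂ * Real.exp (-γ * (j : ℝ)) * Real.cos (ω * t)
              - A₁ * Real.exp (-γ * (j : ℝ)) * Real.cos (ω * t)) = 0) :=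
  evanescent_wave_in_band_gap_general m₁ m₂ k₁ k₂ hk₁ ω hgap₁ hgap₂
end
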